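/- arXiv:1611.01194 — 3 statements merged into one kernel-verified Lean document; each statement's English description precedes it below -/
import Mathlib

section
/- Let (X, 𝒜) be a measurable space, let S be a Markov transition kernel on X, and let μ* be a probability measure on X invariant for S (i.e., ∫_X S(x,A) μ*(dx) = μ*(A) for all A ∈ 𝒜). Suppose there exist θ ∈ (0,1] and a probability measure ν on X such that S(x,A) ≥ θ·ν(A) for every x ∈ X and every A ∈ 𝒜 (a Doeblin minorization). Then for every x ∈ X, every n ≥ 1, and every A ∈ 𝒜, |Sⁿ(x,A) − μ*(A)| ≤ (1−θ)ⁿ. -/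
/-!
Minorization lets one split every `S x` as a common part `ρ = θ ν` plus a residual measure of
mass `1 - θ`. The common part cancels in `∫ g d(S x) - ∫ g d(S y)`, so this difference is at most
`1 - θ` times the oscillation of `g`; applied to `g = Sⁿ(·, A)` it contracts the oscillation of
`Sⁿ(·, A)` by `1 - θ` at each step. Since invariance gives `μ*(A) = ∫ Sⁿ(y, A) μ*(dy)`, the
distance `|Sⁿ(x, A) - μ*(A)|` is bounded by that oscillation.
-/

open MeasureTheory ProbabilityTheory Set

/-- The `n`-fold iterate of a Markov transition kernel, with `S⁰(x,·) = δ_x`. -/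
noncomputable def kernelIter {X : Type*} [MeasurableSpace X] (S : Kernel X X) :
    ℕ → Kernel X X
  | 0 => Kernel.id
  | n + 1 => S ∘ₖ kernelIter S n

theorem kernelIter_eq_pow {X : Type*} [MeasurableSpace X] (S : Kernel X X) (n : ℕ) :
    kernelIter S n = S ^ n := by
  induction n with
  | zero => rfl
  | succ n ih => rw [pow_succ', ← ih]; rfl

theorem MeasureTheory.bind_measureReal_apply {X Y : Type*} [MeasurableSpace X] [MeasurableSpace Y]
    (μ : Measure X) (κ : Kernel X Y) [IsFiniteKernel κ] {s : Set Y} (hs : MeasurableSet s) :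
    (μ.bind κ).real s = ∫ x, (κ x).real s ∂μ := by
  rw [measureReal_def, Measure.bind_apply hs κ.aemeasurable,
    ← integral_toReal (κ.measurable_coe hs).aemeasurable (ae_of_all _ fun x => measure_lt_top _ _)]
  rfl

section IntegralOscillation

variable {X : Type*} [MeasurableSpace X] {g : X → ℝ} {c : ℝ}

theorem integral_sub_integral_le_of_measure_univ_eq {μ₁ μ₂ : Measure X} [IsFiniteMeasure μ₁]
    [IsFiniteMeasure μ₂] (hmass : μ₁ univ = μ₂ univ) (hg₁ : Integrable g μ₁)
    (hg₂ : Integrable g μ₂) (hosc : ∀ z w, g z - g w ≤ c) :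
    ∫ z, g z ∂μ₁ - ∫ w, g w ∂μ₂ ≤ μ₁.real univ * c := by
  rcases measureReal_nonneg.eq_or_lt with hm | hm
  · have h₁ : μ₁ univ = 0 := (measureReal_eq_zero_iff).mp hm.symm
    rw [Measure.measure_univ_eq_zero.mp h₁, Measure.measure_univ_eq_zero.mp (hmass.symm.trans h₁)]
    simp
  · -- Integrating the bound `∫ g dμ₁ ≤ μ₁(X) (g w + c)` against `μ₂` avoids dividing by the mass.
    have hpt : ∀ w, ∫ z, g z ∂μ₁ ≤ μ₁.real univ * (g w + c) := fun w => by
      calc ∫ z, g z ∂μ₁ ≤ ∫ _, g w + c ∂μ₁ :=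
            integral_mono hg₁ (integrable_const _) fun z => by linarith [hosc z w]
        _ = μ₁.real univ * (g w + c) := by rw [integral_const, smul_eq_mul]
    have hmass_real : μ₂.real univ = μ₁.real univ := by simp only [measureReal_def, hmass]
    have := integral_mono (integrable_const _) ((hg₂.add (integrable_const c)).const_mul _) hpt
    simp only [Pi.add_apply, integral_const, integral_const_mul, smul_eq_mul, hmass_real,
      integral_add hg₂ (integrable_const c)] at this
    nlinarith

theorem integral_sub_integral_le_of_le_of_le {μ₁ μ₂ ρ : Measure X} [IsFiniteMeasure μ₁]
    [IsFiniteMeasure μ₂] (hmass : μ₁ univ = μ₂ univ) (hρ₁ : ρ ≤ μ₁) (hρ₂ : ρ ≤ μ₂)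
    (hg₁ : Integrable g μ₁) (hg₂ : Integrable g μ₂) (hosc : ∀ z w, g z - g w ≤ c) :
    ∫ z, g z ∂μ₁ - ∫ w, g w ∂μ₂ ≤ (μ₁.real univ - ρ.real univ) * c := by
  have := isFiniteMeasure_of_le μ₁ hρ₁
  have hsplit : ∀ μ, ρ ≤ μ → Integrable g μ → ∫ z, g z ∂μ = ∫ z, g z ∂(μ - ρ) + ∫ z, g z ∂ρ :=
    fun μ hρ hg => by
      conv_lhs => rw [← Measure.sub_add_cancel_of_le hρ]
      exact integral_add_measure (hg.mono_measure Measure.sub_le) (hg.mono_measure hρ)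
  have hresidual := integral_sub_integral_le_of_measure_univ_eq (μ₁ := μ₁ - ρ) (μ₂ := μ₂ - ρ)
    (by rw [Measure.sub_apply .univ hρ₁, Measure.sub_apply .univ hρ₂, hmass])
    (hg₁.mono_measure Measure.sub_le) (hg₂.mono_measure Measure.sub_le) hosc
  rw [measureReal_def, Measure.sub_apply .univ hρ₁,
    ENNReal.toReal_sub_of_le (hρ₁ univ) (measure_ne_top _ _)] at hresidual
  rw [hsplit μ₁ hρ₁ hg₁, hsplit μ₂ hρ₂ hg₂]
  simp only [measureReal_def]
  linarith

end IntegralOscillation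

namespace ProbabilityTheory.Kernel

variable {X : Type*} [MeasurableSpace X]

instance isMarkovKernel_pow (κ : Kernel X X) [IsMarkovKernel κ] (n : ℕ) :
    IsMarkovKernel (κ ^ n) := by
  induction n with
  | zero => exact inferInstanceAs (IsMarkovKernel Kernel.id)
  | succ n ih => rw [pow_succ]; exact inferInstanceAs (IsMarkovKernel ((κ ^ n) ∘ₖ κ))

theorem Invariant.pow {κ : Kernel X X} {μ : Measure X} (hκ : Invariant κ μ) (n : ℕ) :
    Invariant (κ ^ n) μ := by
  induction n with
  | zero => exact Measure.bind_dirac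
  | succ n ih => rw [pow_succ]; exact ih.comp hκ

theorem measureReal_pow_apply_sub_le_of_le {S : Kernel X X} [IsMarkovKernel S] {ρ : Measure X}
    (hρ : ∀ x, ρ ≤ S x) {A : Set X} (hA : MeasurableSet A) (n : ℕ) (x y : X) :
    ((S ^ n) x).real A - ((S ^ n) y).real A ≤ (1 - ρ.real univ) ^ n := by
  induction n generalizing x y with
  | zero =>
    rw [pow_zero (1 - ρ.real univ)]
    linarith [measureReal_nonneg (μ := (S ^ 0) y) (s := A),
      measureReal_le_one (μ := (S ^ 0) x) (s := A)]
  | succ n ih =>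
    have hstep : ∀ z, ((S ^ (n + 1)) z).real A = ∫ w, ((S ^ n) w).real A ∂(S z) := fun z => by
      rw [pow_succ]
      exact bind_measureReal_apply _ _ hA
    rw [hstep, hstep, pow_succ']
    simpa using integral_sub_integral_le_of_le_of_le (by simp) (hρ x) (hρ y)
      (IsMarkovKernel.integrable _ _ hA) (IsMarkovKernel.integrable _ _ hA) ih

end ProbabilityTheory.Kernel

/-- Doeblin's theorem: if a Markov kernel `S` on `(X,𝒜)` has invariant probability measure `μ*`
and satisfies the minorization `S(x,A) ≥ θ·ν(A)` for some `θ ∈ (0,1]` and probability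
measure `ν`, then `|Sⁿ(x,A) − μ*(A)| ≤ (1−θ)ⁿ` for all `x ∈ X`, `n ≥ 1` and `A ∈ 𝒜`. -/
theorem doeblin_minorization_convergence
    {X : Type*} [MeasurableSpace X] (S : Kernel X X) [IsMarkovKernel S]
    (μstar : Measure X) [IsProbabilityMeasure μstar]
    (hinv : ∀ A : Set X, MeasurableSet A → ∫⁻ x, S x A ∂μstar = μstar A)
    (θ : ℝ) (hθ : θ ∈ Set.Ioc (0:ℝ) 1)
    (ν : Measure X) [IsProbabilityMeasure ν]
    (hmin : ∀ x : X, ∀ A : Set X, MeasurableSet A → ENNReal.ofReal θ * ν A ≤ S x A) :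
    ∀ x : X, ∀ n : ℕ, 1 ≤ n → ∀ A : Set X, MeasurableSet A →
      |(kernelIter S n x A).toReal - (μstar A).toReal| ≤ (1 - θ) ^ n := by
  intro x n _ A hA
  have hS : Kernel.Invariant S μstar :=
    Measure.ext fun A hA => by rw [Measure.bind_apply hA S.aemeasurable, hinv A hA]
  have hρ : ∀ x, ENNReal.ofReal θ • ν ≤ S x := fun x => Measure.le_iff.mpr (hmin x)
  have hosc := Kernel.measureReal_pow_apply_sub_le_of_le hρ hA n
  rw [measureReal_ennreal_smul_apply, probReal_univ, ENNReal.toReal_ofReal hθ.1.le,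
    mul_one] at hosc
  set g := fun y => ((S ^ n) y).real A
  have hx : ((S ^ n) x).real A = ∫ y, g y ∂(Measure.dirac x) :=
    (integral_dirac' _ _ ((S ^ n).measurable_coe hA).ennreal_toReal.stronglyMeasurable).symm
  have hμ : μstar.real A = ∫ y, g y ∂μstar := by
    conv_lhs => rw [← (hS.pow n).def]
    exact bind_measureReal_apply _ _ hA
  have hg : ∀ μ : Measure X, [IsFiniteMeasure μ] → Integrable g μ :=
    fun μ _ => Kernel.IsMarkovKernel.integrable μ _ hA
  rw [← measureReal_def, ← measureReal_def, kernelIter_eq_pow, hx, hμ, abs_sub_le_iff]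
  have hmass : Measure.dirac x univ = μstar univ := by simp
  constructor
  · simpa using integral_sub_integral_le_of_measure_univ_eq hmass (hg _) (hg _) hosc
  · simpa using integral_sub_integral_le_of_measure_univ_eq hmass.symm (hg _) (hg _) hosc
end

section
/- Let X ⊂ ℝ^d (d ≥ 1) be a compact convex set with nonempty interior and let e ∈ ℝ^d be a unit vector. Then for every Borel set A ⊆ X, ∫_X (ℒ¹({λ ∈ ℝ : x + λe ∈ A}) / ℒ¹({λ ∈ ℝ : x + λe ∈ X})) dℒ_d(x) = ℒ_d(A), where the quotient is interpreted as 0 when the denominator vanishes. In particular, the Lebesgue measure restricted to X is invariant for the hit-and-run transition kernel. -/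
/-!
Take orthonormal coordinates whose first axis is `e`. They preserve volume, and in them the chord
of a set through `x` is a translate of the fiber `{a | (a, y) ∈ ·}` of a subset of
`ℝ × ℝ^(d-1)`, where `y` is the tail of the coordinates of `x`. By Tonelli, integrating the
ratio `|A_y| / |X_y|` over `X` is integrating `|X_y| · |A_y| / |X_y| = |A_y|` over `y`, and by
Cavalieri this is `|A|`.
-/

open MeasureTheory
open scoped ENNReal

section ProdFiber

variable {α β : Type*} [MeasurableSpace α] [MeasurableSpace β] {μ : Measure α} {ν : Measure β}
  [SFinite μ] [SFinite ν] {S T : Set (α × β)}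

theorem setLIntegral_prod_fiber_ratio (hS : MeasurableSet S) (hT : MeasurableSet T) (hTS : T ⊆ S)
    (hSfin : μ.prod ν S ≠ ∞) :
    ∫⁻ p in S, μ {a | (a, p.2) ∈ T} / μ {a | (a, p.2) ∈ S} ∂μ.prod ν = μ.prod ν T := by
  have hTy := measurable_measure_prodMk_right (μ := μ) hT
  have hSy := measurable_measure_prodMk_right (μ := μ) hS
  have hfiber_fin : ∀ᵐ y ∂ν, μ {a | (a, y) ∈ S} < ∞ :=
    ae_lt_top hSy (by rwa [Measure.prod_apply_symm hS] at hSfin)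
  calc ∫⁻ p in S, μ {a | (a, p.2) ∈ T} / μ {a | (a, p.2) ∈ S} ∂μ.prod ν
      = ∫⁻ y, ∫⁻ a, S.indicator
          (fun p ↦ μ {a | (a, p.2) ∈ T} / μ {a | (a, p.2) ∈ S}) (a, y) ∂μ ∂ν := by
        rw [← lintegral_indicator hS]
        exact lintegral_prod_symm' _ (((hTy.div hSy).comp measurable_snd).indicator hS)
    _ = ∫⁻ y, ∫⁻ a, {a | (a, y) ∈ S}.indicator
          (fun _ ↦ μ {a | (a, y) ∈ T} / μ {a | (a, y) ∈ S}) a ∂μ ∂ν := rfl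
    _ = ∫⁻ y, μ {a | (a, y) ∈ T} / μ {a | (a, y) ∈ S} * μ {a | (a, y) ∈ S} ∂ν := by
        congr 1 with y
        exact lintegral_indicator_const (measurable_prodMk_right hS) _
    _ = ∫⁻ y, μ {a | (a, y) ∈ T} ∂ν := by
        -- on a fiber of infinite measure the ratio is `0`, so this needs the fibers of `S` finite
        refine lintegral_congr_ae (hfiber_fin.mono fun y hy ↦ ?_)
        dsimp only
        rcases eq_or_ne (μ {a | (a, y) ∈ S}) 0 with h0 | h0
        · rw [h0, mul_zero]
          exact (measure_mono_null (fun a (ha : (a, y) ∈ T) ↦ hTS ha) h0).symm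
        · exact ENNReal.div_mul_cancel h0 hy.ne
    _ = μ.prod ν T := (Measure.prod_apply_symm hT).symm

theorem setIntegral_prod_fiber_ratio (hS : MeasurableSet S) (hT : MeasurableSet T) (hTS : T ⊆ S)
    (hSfin : μ.prod ν S ≠ ∞) :
    ∫ p in S, (μ {a | (a, p.2) ∈ T}).toReal / (μ {a | (a, p.2) ∈ S}).toReal ∂μ.prod ν
      = (μ.prod ν T).toReal := by
  simp_rw [← ENNReal.toReal_div]
  rw [integral_toReal, setLIntegral_prod_fiber_ratio hS hT hTS hSfin]
  · exact (((measurable_measure_prodMk_right hT).div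
      (measurable_measure_prodMk_right hS)).comp measurable_snd).aemeasurable
  · refine ae_of_all _ fun p ↦ (ENNReal.div_le_of_le_mul ?_).trans_lt ENNReal.one_lt_top
    rw [one_mul]
    exact measure_mono fun a ha ↦ hTS ha

end ProdFiber

namespace OrthonormalBasis

variable {E : Type*} [NormedAddCommGroup E] [InnerProductSpace ℝ E] [MeasurableSpace E]
  [BorelSpace E] {n : ℕ} (b : OrthonormalBasis (Fin (n + 1)) ℝ E)

noncomputable def headTailEquiv : E ≃ᵐ ℝ × (Fin n → ℝ) :=
  b.repr.toHomeomorph.toMeasurableEquiv.trans <|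
    (MeasurableEquiv.toLp 2 (Fin (n + 1) → ℝ)).symm.trans <|
      MeasurableEquiv.piFinSuccAbove (fun _ ↦ ℝ) 0

theorem measurePreserving_headTailEquiv [FiniteDimensional ℝ E] :
    MeasurePreserving b.headTailEquiv :=
  ((volume_preserving_piFinSuccAbove (fun _ ↦ ℝ) 0).comp
    (EuclideanSpace.volume_preserving_symm_measurableEquiv_toLp (Fin (n + 1)))).comp
      b.measurePreserving_repr

theorem headTailEquiv_add_smul (x : E) (l : ℝ) :
    b.headTailEquiv (x + l • b 0) = ((b.headTailEquiv x).1 + l, (b.headTailEquiv x).2) := by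
  have hrepr : b.repr (x + l • b 0) = b.repr x + l • EuclideanSpace.single 0 1 := by
    rw [map_add, map_smul, b.repr_self]
  ext j
  · change b.repr (x + l • b 0) 0 = b.repr x 0 + l
    simp [hrepr]
  · change b.repr (x + l • b 0) j.succ = b.repr x j.succ
    simp [hrepr, Fin.succ_ne_zero]

theorem volume_setOf_add_smul_mem (x : E) (A : Set E) :
    volume {l : ℝ | x + l • b 0 ∈ A}
      = volume {l : ℝ | (l, (b.headTailEquiv x).2) ∈ b.headTailEquiv.symm ⁻¹' A} := by
  have : {l : ℝ | x + l • b 0 ∈ A}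
      = (fun l ↦ (b.headTailEquiv x).1 + l) ⁻¹'
          {l | (l, (b.headTailEquiv x).2) ∈ b.headTailEquiv.symm ⁻¹' A} := by
    ext l
    simp [← headTailEquiv_add_smul]
  rw [this, measure_preimage_add]

end OrthonormalBasis

theorem exists_orthonormalBasis_fin_succ_apply_zero {E : Type*} [NormedAddCommGroup E]
    [InnerProductSpace ℝ E] [FiniteDimensional ℝ E] {e : E} (he : ‖e‖ = 1) :
    ∃ n, ∃ b : OrthonormalBasis (Fin (n + 1)) ℝ E, b 0 = e := by
  have : Nontrivial E := nontrivial_of_ne e 0 (by rintro rfl; simp at he)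
  obtain ⟨n, hn⟩ : ∃ n, Module.finrank ℝ E = n + 1 :=
    ⟨_, (Nat.succ_pred_eq_of_pos Module.finrank_pos).symm⟩
  have hunit : Orthonormal ℝ (({0} : Set (Fin (n + 1))).domRestrict fun _ ↦ e) :=
    orthonormal_subsingleton_iff.mpr fun _ ↦ he
  obtain ⟨b, hb⟩ := hunit.exists_orthonormalBasis_extension_of_card_eq (by simpa using hn)
  exact ⟨n, b, hb 0 rfl⟩

theorem setIntegral_volume_chord_div_volume_chord {E : Type*} [NormedAddCommGroup E]
    [InnerProductSpace ℝ E] [FiniteDimensional ℝ E] [MeasurableSpace E] [BorelSpace E]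
    {e : E} (he : ‖e‖ = 1) {X A : Set E} (hX : MeasurableSet X) (hXfin : volume X ≠ ∞)
    (hA : MeasurableSet A) (hAX : A ⊆ X) :
    ∫ x in X, (volume {l : ℝ | x + l • e ∈ A}).toReal / (volume {l : ℝ | x + l • e ∈ X}).toReal
      = (volume A).toReal := by
  obtain ⟨n, b, rfl⟩ := exists_orthonormalBasis_fin_succ_apply_zero he
  set Φ := b.headTailEquiv
  have hΦ : MeasurePreserving Φ := b.measurePreserving_headTailEquiv
  have hΦsymm : MeasurePreserving Φ.symm := hΦ.symm Φ
  calc ∫ x in X, (volume {l : ℝ | x + l • b 0 ∈ A}).toReal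
          / (volume {l : ℝ | x + l • b 0 ∈ X}).toReal
      = ∫ x in Φ ⁻¹' (Φ.symm ⁻¹' X), (volume {l : ℝ | (l, (Φ x).2) ∈ Φ.symm ⁻¹' A}).toReal
          / (volume {l : ℝ | (l, (Φ x).2) ∈ Φ.symm ⁻¹' X}).toReal := by
        rw [show Φ ⁻¹' (Φ.symm ⁻¹' X) = X from Φ.toEquiv.preimage_symm_preimage X]
        simp only [b.volume_setOf_add_smul_mem, Φ]
    _ = ∫ p in Φ.symm ⁻¹' X, (volume {l : ℝ | (l, p.2) ∈ Φ.symm ⁻¹' A}).toReal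
          / (volume {l : ℝ | (l, p.2) ∈ Φ.symm ⁻¹' X}).toReal :=
        hΦ.setIntegral_preimage_emb Φ.measurableEmbedding (fun p ↦
          (volume {l : ℝ | (l, p.2) ∈ Φ.symm ⁻¹' A}).toReal
            / (volume {l : ℝ | (l, p.2) ∈ Φ.symm ⁻¹' X}).toReal) _
    _ = (volume (Φ.symm ⁻¹' A)).toReal :=
        setIntegral_prod_fiber_ratio (Φ.symm.measurable hX) (Φ.symm.measurable hA)
          (fun _ hp ↦ hAX hp)
          (by rwa [← Measure.volume_eq_prod, hΦsymm.measure_preimage hX.nullMeasurableSet])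
    _ = (volume A).toReal := by rw [hΦsymm.measure_preimage hA.nullMeasurableSet]

theorem hit_and_run_lebesgue_invariant_general (d : ℕ)
    (X : Set (EuclideanSpace ℝ (Fin d))) (hXcompact : IsCompact X)
    (e : EuclideanSpace ℝ (Fin d)) (he : ‖e‖ = 1)
    (A : Set (EuclideanSpace ℝ (Fin d))) (hA : MeasurableSet A) (hAX : A ⊆ X) :
    ∫ x in X,
        (volume {l : ℝ | x + l • e ∈ A}).toReal / (volume {l : ℝ | x + l • e ∈ X}).toReal
      = (volume A).toReal :=
  setIntegral_volume_chord_div_volume_chord he hXcompact.isClosed.measurableSet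
    hXcompact.measure_lt_top.ne hA hAX

/-- Invariance of Lebesgue measure for the hit-and-run step along a fixed unit direction `e`:
for a compact convex `X ⊂ ℝ^d` with nonempty interior and any Borel `A ⊆ X`,
`∫_X ℒ¹({λ : x+λe ∈ A})/ℒ¹({λ : x+λe ∈ X}) dℒ_d(x) = ℒ_d(A)`
(the quotient being `0` when the denominator vanishes). -/
theorem hit_and_run_lebesgue_invariant (d : ℕ) (hd : 1 ≤ d)
    (X : Set (EuclideanSpace ℝ (Fin d))) (hXcompact : IsCompact X) (hXconvex : Convex ℝ X)
    (hXint : (interior X).Nonempty)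
    (e : EuclideanSpace ℝ (Fin d)) (he : ‖e‖ = 1)
    (A : Set (EuclideanSpace ℝ (Fin d))) (hA : MeasurableSet A) (hAX : A ⊆ X) :
    ∫ x in X,
        (volume {l : ℝ | x + l • e ∈ A}).toReal / (volume {l : ℝ | x + l • e ∈ X}).toReal
      = (volume A).toReal :=
  hit_and_run_lebesgue_invariant_general d X hXcompact e he A hA hAX
end

section
/- Let N ≥ 2 and let A be an N×N complex Hermitian matrix with Tr A = 1. If ‖A − I/N‖_HS ≤ 1/√(N(N−1)), then A is positive semidefinite, i.e., A is a density matrix. Hence the radius of the ball inscribed in the set Ω_N of density matrices (within the hyperplane of trace-one Hermitian matrices) is r = 1/√(N(N−1)). -/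
open Matrix ComplexOrder

/-!
Write `μ` for the eigenvalues of `A` and `g = μ - 1/N`, so that `∑ g = 0` and
`‖A - I/N‖²_HS = ∑ g²`. Since `g k = -∑_{i ≠ k} g i`, Cauchy–Schwarz gives
`g k² ≤ (N - 1)(∑ g² - g k²)`, i.e. `N g k² ≤ (N - 1) ∑ g² ≤ 1/N`.
Hence `|g k| ≤ 1/N` and `μ k = g k + 1/N ≥ 0`.
-/

open Finset in
theorem card_mul_sq_le_of_sum_eq_zero {ι : Type*} [Fintype ι] {g : ι → ℝ}
    (hg : ∑ i, g i = 0) (k : ι) :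
    Fintype.card ι * g k ^ 2 ≤ (Fintype.card ι - 1) * ∑ i, g i ^ 2 := by
  classical
  have hrest : ∑ i ∈ univ.erase k, g i = -g k := by
    linarith [add_sum_erase univ g (mem_univ k)]
  have hcard : ((#(univ.erase k) : ℕ) : ℝ) = Fintype.card ι - 1 := by
    rw [card_erase_of_mem (mem_univ k), card_univ,
      Nat.cast_sub (Fintype.card_pos_iff.mpr ⟨k⟩), Nat.cast_one]
  have hcs := sq_sum_le_card_mul_sum_sq (s := univ.erase k) (f := g)
  rw [hrest, hcard, neg_sq] at hcs
  have hsplit := add_sum_erase univ (fun i => g i ^ 2) (mem_univ k)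
  nlinarith

theorem nonneg_of_sum_sq_sub_inv_card_le {ι : Type*} [Fintype ι] {μ : ι → ℝ}
    (hsum : ∑ i, μ i = 1)
    (hdist : ∑ i, (μ i - (Fintype.card ι : ℝ)⁻¹) ^ 2
      ≤ ((Fintype.card ι : ℝ) * (Fintype.card ι - 1))⁻¹) (k : ι) :
    0 ≤ μ k := by
  set n : ℝ := (Fintype.card ι : ℝ)
  have hn : 1 ≤ n := Nat.one_le_cast.mpr (Fintype.card_pos_iff.mpr ⟨k⟩)
  have hcentred : ∑ i, (μ i - n⁻¹) = 0 := by
    rw [Finset.sum_sub_distrib, hsum, Finset.sum_const, Finset.card_univ, nsmul_eq_mul,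
      mul_inv_cancel₀ (by positivity), sub_self]
  have hscaled : (n - 1) * ∑ i, (μ i - n⁻¹) ^ 2 ≤ n⁻¹ := by
    calc (n - 1) * ∑ i, (μ i - n⁻¹) ^ 2 ≤ (n - 1) * (n * (n - 1))⁻¹ := by gcongr
      _ ≤ n⁻¹ := by
        -- at `n = 1` the radius is `0⁻¹ = 0`
        rcases hn.eq_or_lt with h | h
        · simp [← h]
        · rw [mul_inv, mul_comm n⁻¹, ← mul_assoc, mul_inv_cancel₀ (by linarith), one_mul]
  have hdev : (μ k - n⁻¹) ^ 2 ≤ n⁻¹ ^ 2 := by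
    rw [sq n⁻¹, ← div_eq_mul_inv, le_div_iff₀ (by linarith)]
    linarith [card_mul_sq_le_of_sum_eq_zero hcentred k]
  linarith [(abs_le_of_sq_le_sq' hdev (by positivity)).1]

namespace Matrix.IsHermitian

variable {𝕜 n : Type*} [RCLike 𝕜] [Fintype n] [DecidableEq n] {A : Matrix n n 𝕜}

theorem trace_cfc (hA : A.IsHermitian) (f : ℝ → ℝ) :
    (cfc f A).trace = ∑ i, (f (hA.eigenvalues i) : 𝕜) := by
  rw [hA.cfc_eq, IsHermitian.cfc, Unitary.conjStarAlgAut_apply, trace_mul_cycle,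
    Unitary.star_mul_self_of_mem hA.eigenvectorUnitary.prop, one_mul, trace_diagonal]
  rfl

theorem trace_conjTranspose_mul_self_sub_smul_one (hA : A.IsHermitian) (c : ℝ) :
    ((A - (c : 𝕜) • 1)ᴴ * (A - (c : 𝕜) • 1)).trace =
      ((∑ i, (hA.eigenvalues i - c) ^ 2 : ℝ) : 𝕜) := by
  have hshift : A - (c : 𝕜) • 1 = A - algebraMap ℝ _ c := by
    rw [Algebra.algebraMap_eq_smul_one, ← RCLike.real_smul_eq_coe_smul]
  have hsa : IsSelfAdjoint (A - algebraMap ℝ _ c) :=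
    hA.isSelfAdjoint.sub (.algebraMap _ (.all c))
  rw [hshift, hsa.isHermitian.eq, ← sq, RCLike.ofReal_sum, ← hA.trace_cfc (fun x => (x - c) ^ 2),
    cfc_pow .., cfc_sub .., cfc_id' .., cfc_const ..]

end Matrix.IsHermitian

theorem density_matrix_insphere_radius_general (N : ℕ)
    (A : Matrix (Fin N) (Fin N) ℂ) (hherm : A.IsHermitian) (htr : A.trace = 1)
    (hdist : Real.sqrt (((A - (N : ℂ)⁻¹ • 1)ᴴ * (A - (N : ℂ)⁻¹ • 1)).trace.re)
      ≤ 1 / Real.sqrt (N * (N - 1))) :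
    A.PosSemidef := by
  refine hherm.posSemidef_iff_eigenvalues_nonneg.mpr fun k => ?_
  have hsum : ∑ i, hherm.eigenvalues i = 1 := by
    have := hherm.trace_eq_sum_eigenvalues
    rw [htr, ← RCLike.ofReal_sum, ← RCLike.ofReal_one] at this
    exact RCLike.ofReal_injective this.symm
  have hfrob : ((A - (N : ℂ)⁻¹ • 1)ᴴ * (A - (N : ℂ)⁻¹ • 1)).trace.re =
      ∑ i, (hherm.eigenvalues i - (N : ℝ)⁻¹) ^ 2 := by
    rw [show (N : ℂ)⁻¹ = RCLike.ofReal (N : ℝ)⁻¹ by simp,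
      hherm.trace_conjTranspose_mul_self_sub_smul_one]
    exact RCLike.ofReal_re (K := ℂ) _
  have hN : (1 : ℝ) ≤ N := by exact_mod_cast k.pos
  rw [hfrob, one_div, ← Real.sqrt_inv,
    Real.sqrt_le_sqrt_iff (inv_nonneg.2 (by nlinarith))] at hdist
  exact nonneg_of_sum_sq_sub_inv_card_le hsum (by simpa using hdist) k

/-- If `A` is an `N×N` Hermitian matrix of trace one whose Hilbert–Schmidt distance to the
maximally mixed state `I/N` is at most `1/√(N(N−1))`, then `A` is positive semidefinite,
i.e. `A` is a density matrix: the inscribed radius of the set `Ω_N` of density matrices,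
within the hyperplane of trace-one Hermitian matrices, is `1/√(N(N−1))`. -/
theorem density_matrix_insphere_radius (N : ℕ) (hN : 2 ≤ N)
    (A : Matrix (Fin N) (Fin N) ℂ) (hherm : A.IsHermitian) (htr : A.trace = 1)
    (hdist : Real.sqrt (((A - (N : ℂ)⁻¹ • 1)ᴴ * (A - (N : ℂ)⁻¹ • 1)).trace.re)
      ≤ 1 / Real.sqrt (N * (N - 1))) :
    A.PosSemidef :=
  density_matrix_insphere_radius_general N A hherm htr hdist
end
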